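/- arXiv:2102.04863 — 5 statements merged into one kernel-verified Lean document; each statement's English description precedes it below -/
import Mathlib

section
/- Let Θ: A → B be a quantum channel with dim(B) = 2 and coefficients Θ^{i,j}_{k,l} := ⟨k| Θ(|i⟩⟨j|) |l⟩. If there exists an index m ∈ {0,1} such that Θ^{i,j}_{m,m} = 0 for all i, j, then all off-diagonal coefficients vanish: Θ^{i,j}_{k,l} = 0 for all k ≠ l and all i, j. -/
open Matrix Complex
open scoped ComplexOrder

/-- A superoperator: a ℂ-linear map from operators on `ι` to operators on `κ`. -/
abbrev SO (ι κ : Type*) [Fintype ι] [DecidableEq ι] [Fintype κ] [DecidableEq κ] :=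
  Matrix ι ι ℂ →ₗ[ℂ] Matrix κ κ ℂ

/-- Choi matrix of a superoperator. -/
noncomputable def choi {ι κ : Type*} [Fintype ι] [DecidableEq ι] [Fintype κ] [DecidableEq κ]
    (Θ : SO ι κ) : Matrix (κ × ι) (κ × ι) ℂ :=
  Matrix.of fun p q => Θ (Matrix.single p.2 q.2 1) p.1 q.1

/-- A quantum state: positive semidefinite with unit trace. -/
def IsState {ι : Type*} [Fintype ι] (ρ : Matrix ι ι ℂ) : Prop := ρ.PosSemidef ∧ ρ.trace = 1

/-- A quantum channel: completely positive (PSD Choi matrix) and trace preserving. -/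
def IsChannel {ι κ : Type*} [Fintype ι] [DecidableEq ι] [Fintype κ] [DecidableEq κ]
    (Θ : SO ι κ) : Prop :=
  (choi Θ).PosSemidef ∧ ∀ ρ, (Θ ρ).trace = ρ.trace

/-- Total dephasing channel in the fixed incoherent basis. -/
noncomputable def deph {ι : Type*} [Fintype ι] [DecidableEq ι] : SO ι ι where
  toFun ρ := Matrix.of fun i j => if i = j then ρ i j else 0
  map_add' := by
    intro x y; ext i j
    by_cases h : i = j <;> simp [h]
  map_smul' := by
    intro c x; ext i j
    by_cases h : i = j <;> simp [h]

/-- Phase-encoding unitary channel `Λ_φ`. -/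
noncomputable def phaseCh {ι : Type*} [Fintype ι] [DecidableEq ι] (φ : ι → ℝ) : SO ι ι where
  toFun ρ := Matrix.of fun i j => Complex.exp (Complex.I * ((φ i : ℂ) - (φ j : ℂ))) * ρ i j
  map_add' := by
    intro x y; ext i j; simp [mul_add]
  map_smul' := by
    intro c x; ext i j; simp; ring

/-- The superoperator `λ·id − (1−λ)·Λ_φ`. -/
noncomputable def diffOp {ι : Type*} [Fintype ι] [DecidableEq ι] (lam : ℝ) (φ : ι → ℝ) :
    SO ι ι :=
  (lam : ℂ) • LinearMap.id - ((1 - lam : ℝ) : ℂ) • phaseCh φ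

/-- Trace norm of a matrix: sum of singular values. -/
noncomputable def traceNorm {ι : Type*} [Fintype ι] [DecidableEq ι]
    (M : Matrix ι ι ℂ) : ℝ :=
  ∑ i, Real.sqrt ((Matrix.isHermitian_conjTranspose_mul_self M).eigenvalues i)

/-- `Θ ⊗ id` acting on a composite system. -/
noncomputable def tensorId {ι κ ν : Type*} [Fintype ι] [DecidableEq ι] [Fintype κ]
    [DecidableEq κ] [Fintype ν] [DecidableEq ν] (Θ : SO ι κ) : SO (ι × ν) (κ × ν) where
  toFun ρ := Matrix.of fun p q =>
    ∑ i, ∑ j, Θ (Matrix.single i j 1) p.1 q.1 * ρ (i, p.2) (j, q.2)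
  map_add' := by
    intro x y; ext p q
    simp [Matrix.add_apply, mul_add, Finset.sum_add_distrib]
  map_smul' := by
    intro c x; ext p q
    simp only [Matrix.of_apply, Matrix.smul_apply, smul_eq_mul, RingHom.id_apply,
      Finset.mul_sum]
    exact Finset.sum_congr rfl fun i _ => Finset.sum_congr rfl fun j _ => by ring

/-- Detection incoherent channels: `Δ Φ = Δ Φ Δ`. -/
def IsDI {ι κ : Type*} [Fintype ι] [DecidableEq ι] [Fintype κ] [DecidableEq κ]
    (Φ : SO ι κ) : Prop :=
  deph ∘ₗ Φ = deph ∘ₗ Φ ∘ₗ deph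

/-- Maximally incoherent channels: `Ψ Δ = Δ Ψ Δ`. -/
def IsMIO {ι κ : Type*} [Fintype ι] [DecidableEq ι] [Fintype κ] [DecidableEq κ]
    (Ψ : SO ι κ) : Prop :=
  Ψ ∘ₗ deph = deph ∘ₗ Ψ ∘ₗ deph

/-- The pre-processed improvement `M_{λ,φ}(Θ)`. -/
noncomputable def Mpre {α β γ : Type*} [Fintype α] [DecidableEq α] [Fintype β] [DecidableEq β]
    [Fintype γ] [DecidableEq γ] (lam : ℝ) (φ : α → ℝ) (Θ : SO β γ) : ℝ :=
  sSup {x : ℝ | ∃ (Φ : SO α β) (ρ : Matrix α α ℂ), IsChannel Φ ∧ IsDI Φ ∧ IsState ρ ∧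
    x = traceNorm (deph (Θ (Φ (diffOp lam φ ρ))))} - |lam - (1 - lam)|

/-- The post-processed improvement `N_{λ,φ}(Θ)`. -/
noncomputable def Npost {α β γ : Type*} [Fintype α] [DecidableEq α] [Fintype β] [DecidableEq β]
    [Fintype γ] [DecidableEq γ] (lam : ℝ) (φ : γ → ℝ) (Θ : SO α β) : ℝ :=
  sSup {x : ℝ | ∃ (Ψ : SO β γ) (ρ : Matrix α α ℂ), IsChannel Ψ ∧ IsMIO Ψ ∧ IsState ρ ∧
    x = traceNorm (diffOp lam φ (Ψ (Θ (deph ρ))))} - |lam - (1 - lam)|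

/-! The coefficients `Θ (single i j 1) k l` are the entries of the Choi matrix, which is positive
semidefinite; a vanishing diagonal entry of a positive semidefinite matrix forces its whole row
and column to vanish. On a qubit, any pair `k ≠ l` contains the index `m`. -/

namespace Matrix.PosSemidef

variable {n 𝕜 : Type*} [Fintype n] [RCLike 𝕜] {A : Matrix n n 𝕜}

theorem apply_eq_zero_of_apply_self_eq_zero_right (hA : A.PosSemidef) {i : n} (hi : A i i = 0)
    (j : n) : A j i = 0 := by
  classical
  have hcol : A *ᵥ Pi.single i 1 = 0 :=
    (hA.dotProduct_mulVec_zero_iff _).mp (by simpa [mulVec_single_one] using hi)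
  simpa [mulVec_single_one] using congrFun hcol j

theorem apply_eq_zero_of_apply_self_eq_zero_left (hA : A.PosSemidef) {i : n} (hi : A i i = 0)
    (j : n) : A i j = 0 := by
  rw [← hA.isHermitian.apply i j, hA.apply_eq_zero_of_apply_self_eq_zero_right hi, star_zero]

end Matrix.PosSemidef

section ChoiPositive

variable {ι κ : Type*} [Fintype ι] [DecidableEq ι] [Fintype κ] [DecidableEq κ]
  {Θ : SO ι κ} {m : κ}

theorem apply_single_eq_zero_left_of_choi_posSemidef (hΘ : (choi Θ).PosSemidef)
    (hm : ∀ i : ι, Θ (single i i 1) m m = 0) (l : κ) (i j : ι) :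
    Θ (single i j 1) m l = 0 :=
  hΘ.apply_eq_zero_of_apply_self_eq_zero_left (i := (m, i)) (hm i) (l, j)

theorem apply_single_eq_zero_right_of_choi_posSemidef (hΘ : (choi Θ).PosSemidef)
    (hm : ∀ i : ι, Θ (single i i 1) m m = 0) (k : κ) (i j : ι) :
    Θ (single i j 1) k m = 0 :=
  hΘ.apply_eq_zero_of_apply_self_eq_zero_right (i := (m, j)) (hm j) (k, i)

end ChoiPositive

/-- if a channel into a qubit has a vanishing diagonal row of coefficients,
then all off-diagonal coefficients vanish. -/
theorem qubit_offdiag_vanish {ι : Type*} [Fintype ι] [DecidableEq ι]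
    (Θ : SO ι (Fin 2)) (hΘ : IsChannel Θ)
    (h : ∃ m : Fin 2, ∀ i j : ι, Θ (Matrix.single i j 1) m m = 0) :
    ∀ (k l : Fin 2), k ≠ l → ∀ i j : ι, Θ (Matrix.single i j 1) k l = 0 := by
  obtain ⟨m, hm⟩ := h
  intro k l hkl i j
  have hdiag : ∀ i : ι, Θ (single i i 1) m m = 0 := fun i => hm i i
  obtain rfl | rfl : k = m ∨ l = m := by omega
  · exact apply_single_eq_zero_left_of_choi_posSemidef hΘ.1 hdiag l i j
  · exact apply_single_eq_zero_right_of_choi_posSemidef hΘ.1 hdiag k i j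
end

section
/- If Θ is a detection incoherent channel (i.e., ΔΘ = ΔΘΔ) and Λ_φ is the phase-encoding unitary channel Λ_φ(σ) = Σ_{i,j} e^{i(φ_i−φ_j)} |i⟩⟨i| σ |j⟩⟨j|, then for any state ρ and any λ, μ ≥ 0, Δ Θ Φ (λ·id − μ·Λ_φ)(ρ) has trace norm at most |λ − μ| for every detection incoherent channel Φ; equivalently, the pre-processed improvement M_{λ,φ}(Θ) = 0. -/
open Matrix Complex
open scoped ComplexOrder

/-!
Both `Θ` and `Φ` are detection incoherent, hence so is `ΘΦ`: `ΔΘΦ = ΔΘΦΔ`. Dephasing erases the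
phases `e^{i(φ_i - φ_j)}` of `Λ_φ`, which live off the diagonal, so
`ΔΘΦ(λ - μΛ_φ)(ρ) = (λ - μ) ΔΘΦ(ρ)`. Completely positive maps are positive, so `ΘΦ(ρ)` is a state
and its diagonal is a probability vector; the trace norm is therefore exactly `|λ - μ|` for every
admissible `Φ` and `ρ`, and the set whose supremum defines `M_{λ,φ}(Θ)` is `{|λ - μ|}` (it is
nonempty: take a trace-and-prepare channel and a basis state).
-/

open scoped Kronecker

lemma Matrix.IsHermitian.sum_comp_eigenvalues_of_eq_diagonal {𝕜 ι : Type*} [RCLike 𝕜]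
    [Fintype ι] [DecidableEq ι] {A : Matrix ι ι 𝕜} (hA : A.IsHermitian) {d : ι → ℝ}
    (hd : A = diagonal fun i => (d i : 𝕜)) (g : ℝ → ℝ) :
    ∑ i, g (hA.eigenvalues i) = ∑ i, g (d i) := by
  have hroots := hA.roots_charpoly_eq_eigenvalues
  rw [show A.charpoly = _ from congrArg charpoly hd, charpoly_diagonal,
    Polynomial.roots_prod _ _ (by simp [Finset.prod_ne_zero_iff, Polynomial.X_sub_C_ne_zero])]
    at hroots
  simp only [Polynomial.roots_X_sub_C, Multiset.bind_singleton, Function.comp_apply] at hroots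
  have := congrArg (fun m => (m.map fun z : 𝕜 => g (RCLike.re z)).sum) hroots
  simp only [Multiset.map_map, Function.comp_def, RCLike.ofReal_re] at this
  exact this.symm

lemma traceNorm_diagonal {ι : Type*} [Fintype ι] [DecidableEq ι] (r : ι → ℝ) :
    traceNorm (diagonal fun i => (r i : ℂ)) = ∑ i, |r i| := by
  rw [traceNorm, IsHermitian.sum_comp_eigenvalues_of_eq_diagonal _ (d := fun i => r i ^ 2)]
  · simp only [Real.sqrt_sq_eq_abs]
  · simp [diagonal_conjTranspose, diagonal_mul_diagonal, sq]

section Superoperator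

variable {ι κ : Type*} [Fintype ι] [DecidableEq ι] [Fintype κ] [DecidableEq κ]

lemma apply_eq_sum_choi (Θ : SO ι κ) (X : Matrix ι ι ℂ) (p q : κ) :
    Θ X p q = ∑ i, ∑ j, X i j * choi Θ (p, i) (q, j) := by
  conv_lhs => rw [matrix_eq_sum_single X]
  simp only [map_sum, Matrix.sum_apply]
  refine Finset.sum_congr rfl fun i _ => Finset.sum_congr rfl fun j _ => ?_
  rw [show single i j (X i j) = X i j • single i j 1 by rw [smul_single, smul_eq_mul, mul_one],
    map_smul, Matrix.smul_apply, smul_eq_mul, choi, of_apply]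

/-- `Θ (a a†)` is the compression `K† C K` of the Choi matrix `C`, with `K (q, j) p = δ_qp ā_j`. -/
lemma posSemidef_apply_vecMulVec {Θ : SO ι κ} (hΘ : (choi Θ).PosSemidef) (a : ι → ℂ) :
    (Θ (vecMulVec a (star a))).PosSemidef := by
  let K : Matrix (κ × ι) κ ℂ := of fun x q => if x.1 = q then star (a x.2) else 0
  have hK : Θ (vecMulVec a (star a)) = Kᴴ * choi Θ * K := by
    ext p q
    simp only [apply_eq_sum_choi, vecMulVec_apply, Pi.star_apply, RCLike.star_def, mul_apply,
      conjTranspose_apply, of_apply, apply_ite (starRingEnd ℂ), RingHomCompTriple.comp_apply,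
      RingHom.id_apply, map_zero, ite_mul, zero_mul, Fintype.sum_prod_type, Finset.sum_ite_irrel,
      Finset.sum_const_zero, Finset.sum_ite_eq', Finset.mem_univ, ↓reduceIte, mul_ite,
      Finset.sum_mul, mul_zero, K]
    rw [Finset.sum_comm]
    exact Finset.sum_congr rfl fun _ _ => Finset.sum_congr rfl fun _ _ => mul_right_comm _ _ _
  rw [hK]
  exact hΘ.conjTranspose_mul_mul_same K

lemma posSemidef_apply_of_posSemidef_choi {Θ : SO ι κ} (hΘ : (choi Θ).PosSemidef)
    {ρ : Matrix ι ι ℂ} (hρ : ρ.PosSemidef) : (Θ ρ).PosSemidef := by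
  obtain ⟨m, v, rfl⟩ := posSemidef_iff_eq_sum_vecMulVec.mp hρ
  rw [map_sum]
  exact posSemidef_sum _ fun k _ => posSemidef_apply_vecMulVec hΘ (v k)

lemma IsChannel.isState_apply {Θ : SO ι κ} (hΘ : IsChannel Θ) {ρ : Matrix ι ι ℂ}
    (hρ : IsState ρ) : IsState (Θ ρ) :=
  ⟨posSemidef_apply_of_posSemidef_choi hΘ.1 hρ.1, (hΘ.2 ρ).trans hρ.2⟩

end Superoperator

section Dephasing

variable {ι κ ν : Type*} [Fintype ι] [DecidableEq ι] [Fintype κ] [DecidableEq κ]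
  [Fintype ν] [DecidableEq ν]

lemma deph_apply (X : Matrix ι ι ℂ) : deph X = diagonal fun i => X i i := by
  ext i j
  by_cases h : i = j <;> simp [deph, h]

lemma trace_deph (X : Matrix ι ι ℂ) : (deph X).trace = X.trace := by
  rw [deph_apply, trace_diagonal]
  rfl

lemma deph_diffOp (lam : ℝ) (φ : ι → ℝ) (X : Matrix ι ι ℂ) :
    deph (diffOp lam φ X) = ((lam - (1 - lam) : ℝ) : ℂ) • deph X := by
  rw [deph_apply, deph_apply, ← diagonal_smul]
  congr 1
  funext i
  simp only [diffOp, phaseCh, LinearMap.sub_apply, LinearMap.smul_apply, LinearMap.id_apply,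
    LinearMap.coe_mk, AddHom.coe_mk, Matrix.sub_apply, Matrix.smul_apply, of_apply, Pi.smul_apply,
    sub_self, mul_zero, exp_zero, one_mul, smul_eq_mul]
  push_cast
  ring

lemma IsDI.comp {Θ : SO κ ν} {Φ : SO ι κ} (hΘ : IsDI Θ) (hΦ : IsDI Φ) : IsDI (Θ ∘ₗ Φ) := by
  have hΘ' := LinearMap.congr_fun hΘ
  have hΦ' := LinearMap.congr_fun hΦ
  refine LinearMap.ext fun X => ?_
  simp only [LinearMap.comp_apply] at hΘ' hΦ' ⊢
  rw [hΘ', hΦ', ← hΘ']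

lemma IsState.traceNorm_smul_deph {σ : Matrix ι ι ℂ} (hσ : IsState σ) (c : ℝ) :
    traceNorm ((c : ℂ) • deph σ) = |c| := by
  have hreal : ∀ i, σ i i = ((σ i i).re : ℂ) := fun i =>
    Complex.eq_re_of_ofReal_le hσ.1.diag_nonneg
  have hsum : ∑ i, (σ i i).re = 1 := by
    simpa [trace] using congrArg Complex.re hσ.2
  rw [deph_apply, ← diagonal_smul]
  calc traceNorm (diagonal ((c : ℂ) • fun i => σ i i))
      = traceNorm (diagonal fun i => ((c * (σ i i).re : ℝ) : ℂ)) := by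
        congr; funext i; rw [Pi.smul_apply, smul_eq_mul, ofReal_mul, ← hreal i]
    _ = ∑ i, |c| * (σ i i).re := by
        rw [traceNorm_diagonal]
        refine Finset.sum_congr rfl fun i _ => ?_
        rw [abs_mul, abs_of_nonneg (Complex.nonneg_iff.mp hσ.1.diag_nonneg).1]
    _ = |c| := by rw [← Finset.mul_sum, hsum, mul_one]

lemma IsDI.traceNorm_deph_apply_diffOp {Ψ : SO ι κ} (hΨ : IsDI Ψ) (lam : ℝ) (φ : ι → ℝ)
    {ρ : Matrix ι ι ℂ} (hρ : IsState (Ψ ρ)) :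
    traceNorm (deph (Ψ (diffOp lam φ ρ))) = |lam - (1 - lam)| := by
  have hΨ' := LinearMap.congr_fun hΨ
  simp only [LinearMap.comp_apply] at hΨ'
  rw [hΨ', deph_diffOp, map_smul, map_smul, ← hΨ']
  exact hρ.traceNorm_smul_deph _

end Dephasing

section TraceAndPrepare

variable {ι κ : Type*} [Fintype ι] [DecidableEq ι] [Fintype κ] [DecidableEq κ]

noncomputable def traceAndPrepare (b : κ) : SO ι κ :=
  (traceLinearMap ι ℂ ℂ).smulRight (single b b 1)

lemma choi_traceAndPrepare (b : κ) :
    choi (traceAndPrepare b : SO ι κ) = single b b 1 ⊗ₖ 1 := by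
  ext ⟨p, i⟩ ⟨q, j⟩
  by_cases h : i = j
  · subst h; simp [choi, traceAndPrepare, kroneckerMap_apply]
  · simp [choi, traceAndPrepare, kroneckerMap_apply, h, trace_single_eq_of_ne]

lemma isChannel_traceAndPrepare (b : κ) : IsChannel (traceAndPrepare b : SO ι κ) := by
  refine ⟨?_, fun ρ => ?_⟩
  · rw [choi_traceAndPrepare, ← diagonal_single]
    exact (PosSemidef.diagonal (Pi.single_nonneg.mpr zero_le_one)).kronecker PosSemidef.one
  · simp [traceAndPrepare]

lemma isDI_traceAndPrepare (b : κ) : IsDI (traceAndPrepare b : SO ι κ) := by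
  ext X : 1
  simp [traceAndPrepare, trace_deph]

lemma isState_single (a : ι) : IsState (single a a (1 : ℂ)) :=
  ⟨diagonal_single a (1 : ℂ) ▸ PosSemidef.diagonal (Pi.single_nonneg.mpr zero_le_one),
    trace_single_eq_same a 1⟩

end TraceAndPrepare

theorem Mpre_nullity_general {α β γ : Type*} [Fintype α] [DecidableEq α] [Nonempty α]
    [Fintype β] [DecidableEq β] [Nonempty β] [Fintype γ] [DecidableEq γ]
    (lam : ℝ) (φ : α → ℝ)
    (Θ : SO β γ) (hΘ : IsChannel Θ) (hDI : IsDI Θ) :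
    Mpre lam φ Θ = 0 := by
  have hvalue : ∀ (Φ : SO α β) (ρ : Matrix α α ℂ), IsChannel Φ → IsDI Φ → IsState ρ →
      traceNorm (deph (Θ (Φ (diffOp lam φ ρ)))) = |lam - (1 - lam)| :=
    fun Φ ρ hΦ hΦDI hρ =>
      (hDI.comp hΦDI).traceNorm_deph_apply_diffOp lam φ (hΘ.isState_apply (hΦ.isState_apply hρ))
  obtain ⟨a⟩ := ‹Nonempty α›
  obtain ⟨b⟩ := ‹Nonempty β›
  have hΦ₀ := isChannel_traceAndPrepare (ι := α) b
  have hΦ₀DI := isDI_traceAndPrepare (ι := α) b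
  have hρ₀ := isState_single a
  have hset : {x : ℝ | ∃ (Φ : SO α β) (ρ : Matrix α α ℂ), IsChannel Φ ∧ IsDI Φ ∧ IsState ρ ∧
      x = traceNorm (deph (Θ (Φ (diffOp lam φ ρ))))} = {|lam - (1 - lam)|} := by
    refine Set.eq_singleton_iff_unique_mem.mpr ⟨?_, ?_⟩
    · exact ⟨_, _, hΦ₀, hΦ₀DI, hρ₀, (hvalue _ _ hΦ₀ hΦ₀DI hρ₀).symm⟩
    · rintro _ ⟨Φ, ρ, hΦ, hΦDI, hρ, rfl⟩
      exact hvalue Φ ρ hΦ hΦDI hρ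
  rw [Mpre, hset, csSup_singleton, sub_self]

/-- nullity of the pre-processed improvement on detection incoherent channels. -/
theorem Mpre_nullity {α β γ : Type*} [Fintype α] [DecidableEq α] [Nonempty α]
    [Fintype β] [DecidableEq β] [Nonempty β] [Fintype γ] [DecidableEq γ] [Nonempty γ]
    (lam : ℝ) (hlam : lam ∈ Set.Icc (0 : ℝ) 1) (φ : α → ℝ)
    (Θ : SO β γ) (hΘ : IsChannel Θ) (hDI : IsDI Θ) :
    Mpre lam φ Θ = 0 :=
  Mpre_nullity_general lam φ Θ hΘ hDI
end

section
/- For every pure bipartite state |ψ⟩_{AZ} there exist a detection incoherent channel Φ^{AZ←A} and a pure state |φ⟩_A such that Φ^{AZ←A}(λ − μΛ_φ^A)(|φ⟩⟨φ|_A) = ((λ − μΛ_φ^A) ⊗ id^Z)(|ψ⟩⟨ψ|_{AZ}). -/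
open Matrix Complex
open scoped ComplexOrder

/-!
Split `ψ` along `A` as `ψ (a, z) = u a z * v a`, where `v a ≥ 0` is the norm of the slice
`ψ (a, ·)` and `u a` is a unit vector, and let `Φ` be conjugation by the isometry
`controlledMap u : |a⟩ ↦ |a⟩ ⊗ |u a⟩`. Then `Φ |v⟩⟨v| = |ψ⟩⟨ψ|` and
`(Φ ρ) (a, z) (b, z') = u a z * ρ a b * conj (u b z')`. So `Φ ∘ Θ = (Θ ⊗ id) ∘ Φ` for every Schur
multiplier `Θ` on `A`, such as `λ − μΛ_φ`, and the diagonal of `Φ ρ` only sees the diagonal of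
`ρ`, which is detection incoherence.
-/

section Conjugation

variable {ι κ : Type*} [Fintype ι] [DecidableEq ι] [Fintype κ] [DecidableEq κ]

noncomputable def conjSO (V : Matrix κ ι ℂ) : SO ι κ where
  toFun ρ := V * ρ * Vᴴ
  map_add' x y := by rw [Matrix.mul_add, Matrix.add_mul]
  map_smul' c x := by rw [Matrix.mul_smul, Matrix.smul_mul]; rfl

lemma conjSO_apply (V : Matrix κ ι ℂ) (ρ : Matrix ι ι ℂ) : conjSO V ρ = V * ρ * Vᴴ := rfl

lemma choi_conjSO (V : Matrix κ ι ℂ) :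
    choi (conjSO V) = vecMulVec (fun p : κ × ι => V p.1 p.2) (star fun p => V p.1 p.2) := by
  ext p q
  simp [choi, conjSO_apply, Matrix.mul_apply, Matrix.single_apply, vecMulVec_apply, ite_and]

lemma isChannel_conjSO {V : Matrix κ ι ℂ} (hV : Vᴴ * V = 1) : IsChannel (conjSO V) :=
  ⟨choi_conjSO V ▸ posSemidef_vecMulVec_self_star _, fun ρ => by
    rw [conjSO_apply, Matrix.trace_mul_cycle, hV, Matrix.one_mul]⟩

end Conjugation

section Controlled

variable {ι ν : Type*} [Fintype ι] [DecidableEq ι] [Fintype ν] [DecidableEq ν]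

def controlledMap (u : ι → ν → ℂ) : Matrix (ι × ν) ι ℂ :=
  of fun p a => if p.1 = a then u a p.2 else 0

lemma conjSO_controlledMap_apply (u : ι → ν → ℂ) (ρ : Matrix ι ι ℂ) (p q : ι × ν) :
    conjSO (controlledMap u) ρ p q = u p.1 p.2 * ρ p.1 q.1 * star (u q.1 q.2) := by
  simp [conjSO_apply, controlledMap, Matrix.mul_apply, apply_ite (starRingEnd ℂ)]

omit [DecidableEq ν] in
lemma controlledMap_conjTranspose_mul_self {u : ι → ν → ℂ}
    (hu : ∀ a, ∑ z, ‖u a z‖ ^ 2 = 1) : (controlledMap u)ᴴ * controlledMap u = 1 := by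
  ext a b
  simp only [controlledMap, Matrix.mul_apply, conjTranspose_apply, of_apply,
    Fintype.sum_prod_type]
  by_cases hab : a = b
  · subst hab
    simp [apply_ite (starRingEnd ℂ), ← ite_and, Finset.sum_ite_eq', conj_mul', ← ofReal_pow,
      ← ofReal_sum, hu]
  · rw [one_apply_ne hab]
    refine Finset.sum_eq_zero fun x _ => Finset.sum_eq_zero fun y _ => ?_
    by_cases hx : x = a <;> simp [hx, hab]

lemma isDI_conjSO_controlledMap (u : ι → ν → ℂ) : IsDI (conjSO (controlledMap u)) := by
  refine LinearMap.ext fun ρ => ?_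
  ext p q
  by_cases hpq : p = q
  · subst hpq
    simp [deph, conjSO_controlledMap_apply]
  · simp [deph, hpq]

lemma conjSO_controlledMap_hadamard (u : ι → ν → ℂ) (c ρ : Matrix ι ι ℂ) :
    conjSO (controlledMap u) (c ⊙ ρ)
      = (of fun p q : ι × ν => c p.1 q.1) ⊙ conjSO (controlledMap u) ρ := by
  ext p q
  simp only [conjSO_controlledMap_apply, hadamard_apply, of_apply]
  ring

lemma conjSO_controlledMap_vecMulVec (u : ι → ν → ℂ) (v : ι → ℂ) :
    conjSO (controlledMap u) (vecMulVec v (star v))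
      = vecMulVec (fun p : ι × ν => u p.1 p.2 * v p.1) (star fun p => u p.1 p.2 * v p.1) := by
  ext p q
  simp only [conjSO_controlledMap_apply, vecMulVec_apply, Pi.star_apply, star_mul']
  ring

lemma tensorId_apply_of_eq_hadamard {Θ : SO ι ι} {c : Matrix ι ι ℂ} (hΘ : ∀ ρ, Θ ρ = c ⊙ ρ)
    (ρ : Matrix (ι × ν) (ι × ν) ℂ) :
    tensorId Θ ρ = (of fun p q : ι × ν => c p.1 q.1) ⊙ ρ := by
  ext p q
  simp [tensorId, hΘ, Matrix.single_apply, ite_and]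

end Controlled

lemma diffOp_apply {ι : Type*} [Fintype ι] [DecidableEq ι] (lam : ℝ) (φ : ι → ℝ)
    (ρ : Matrix ι ι ℂ) :
    diffOp lam φ ρ
      = (of fun a b => (lam : ℂ) - ((1 - lam : ℝ) : ℂ) * exp (I * (φ a - φ b))) ⊙ ρ := by
  ext a b
  simp [diffOp, phaseCh, sub_mul, mul_assoc]

lemma exists_unit_mul_sqrt_sum_norm_sq {ν : Type*} [Fintype ν] [Nonempty ν] (w : ν → ℂ) :
    ∃ u : ν → ℂ, ∑ z, ‖u z‖ ^ 2 = 1 ∧ ∀ z, u z * (√(∑ z, ‖w z‖ ^ 2) : ℂ) = w z := by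
  classical
  set r := √(∑ z, ‖w z‖ ^ 2) with hr_def
  rcases eq_or_ne r 0 with hr | hr
  · have hw : w = 0 := by
      rw [hr_def, Real.sqrt_eq_zero (by positivity),
        Finset.sum_eq_zero_iff_of_nonneg fun _ _ => by positivity] at hr
      ext z; simpa using hr z
    obtain ⟨z₀⟩ := ‹Nonempty ν›
    exact ⟨Pi.single z₀ 1, by simp [Pi.single_apply, apply_ite], by simp [hr, hw]⟩
  · refine ⟨fun z => w z / r, ?_, fun z => div_mul_cancel₀ _ (ofReal_ne_zero.2 hr)⟩
    simp only [norm_div, norm_real, Real.norm_eq_abs, div_pow, sq_abs, ← Finset.sum_div]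
    rw [div_eq_one_iff_eq (by positivity), hr_def, Real.sq_sqrt (by positivity)]

theorem exists_DI_expansion_general {A Z : Type*} [Fintype A] [DecidableEq A]
    [Fintype Z] [DecidableEq Z] [Nonempty Z]
    (lam : ℝ) (φ : A → ℝ)
    (ψ : A × Z → ℂ) (hψ : ∑ p, ‖ψ p‖ ^ 2 = 1) :
    ∃ (Φ : SO A (A × Z)) (v : A → ℂ),
      IsChannel Φ ∧ IsDI Φ ∧ (∑ a, ‖v a‖ ^ 2 = 1) ∧
      Φ (diffOp lam φ (Matrix.vecMulVec v (star v)))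
        = tensorId (diffOp lam φ) (Matrix.vecMulVec ψ (star ψ)) := by
  choose u hu hψu using fun a => exists_unit_mul_sqrt_sum_norm_sq fun z => ψ (a, z)
  set v : A → ℂ := fun a => (√(∑ z, ‖ψ (a, z)‖ ^ 2) : ℂ)
  have hψ_eq : ψ = fun p => u p.1 p.2 * v p.1 := funext fun p => (hψu p.1 p.2).symm
  refine ⟨conjSO (controlledMap u), v,
    isChannel_conjSO (controlledMap_conjTranspose_mul_self hu), isDI_conjSO_controlledMap u, ?_, ?_⟩
  · rw [← hψ, Fintype.sum_prod_type]
    simp [v, Real.sq_sqrt (Finset.sum_nonneg fun _ _ => sq_nonneg _)]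
  · rw [hψ_eq, ← conjSO_controlledMap_vecMulVec,
      tensorId_apply_of_eq_hadamard (diffOp_apply lam φ), diffOp_apply,
      conjSO_controlledMap_hadamard]

/-- for every pure bipartite state `ψ` on `A ⊗ Z` there are a detection
incoherent channel `Φ : A → A ⊗ Z` and a pure state `v` on `A` with
`Φ (λ − μΛ_φ)(|v⟩⟨v|) = ((λ − μΛ_φ) ⊗ id)(|ψ⟩⟨ψ|)`. -/
theorem exists_DI_expansion {A Z : Type*} [Fintype A] [DecidableEq A] [Nonempty A]
    [Fintype Z] [DecidableEq Z] [Nonempty Z]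
    (lam : ℝ) (hlam : lam ∈ Set.Icc (0 : ℝ) 1) (φ : A → ℝ)
    (ψ : A × Z → ℂ) (hψ : ∑ p, ‖ψ p‖ ^ 2 = 1) :
    ∃ (Φ : SO A (A × Z)) (v : A → ℂ),
      IsChannel Φ ∧ IsDI Φ ∧ (∑ a, ‖v a‖ ^ 2 = 1) ∧
      Φ (diffOp lam φ (Matrix.vecMulVec v (star v)))
        = tensorId (diffOp lam φ) (Matrix.vecMulVec ψ (star ψ)) :=
  exists_DI_expansion_general lam φ ψ hψ
end

section
/- Let Ψ^{C←BZ} and Θ^{B←A} be quantum channels and ρ_{AZ} an incoherent (diagonal) state. Then there exist a probability distribution {p_i}, incoherent states {ρ_{|i}} on A, and channels {Ψ_i^{C←B}} such that Ψ^{C←BZ}(Θ^{B←A} ⊗ id^Z)(ρ_{AZ}) = Σ_i p_i Ψ_i^{C←B} Θ^{B←A}(ρ_{|i}). Moreover, if Ψ^{C←BZ} is maximally incoherent (MIO), the Ψ_i^{C←B} can be chosen in MIO. -/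
/-!
An incoherent state is classical on `Z`: `ρ = ∑_z p_z ρ_{|z} ⊗ |z⟩⟨z|`, with every `ρ_{|z}`
incoherent. Since `Θ ⊗ id` acts block by block, `Ψ (Θ ⊗ id) ρ = ∑_z p_z Ψ_z Θ ρ_{|z}` with
`Ψ_z X = Ψ (X ⊗ |z⟩⟨z|)`. The Choi matrix of `Ψ_z` is a principal submatrix of that of `Ψ`, so
`Ψ_z` is a channel, and `X ↦ X ⊗ |z⟩⟨z|` commutes with dephasing, so `Ψ_z` is MIO when `Ψ` is.
-/

open Matrix Complex
open scoped ComplexOrder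

open scoped Kronecker

section Dephasing

variable {ι κ : Type*} [Fintype ι] [DecidableEq ι] [Fintype κ] [DecidableEq κ]

@[simp]
lemma deph_apply_s15 (ρ : Matrix ι ι ℂ) (i j : ι) : deph ρ i j = if i = j then ρ i j else 0 := rfl

lemma deph_submatrix {f : κ → ι} (hf : Function.Injective f) (ρ : Matrix ι ι ℂ) :
    deph (ρ.submatrix f f) = (deph ρ).submatrix f f := by
  ext i j
  simp [hf.eq_iff]

lemma exists_incoherent_state_smul_eq [Nonempty ι] {M : Matrix ι ι ℂ} (hM : M.PosSemidef)
    (hinc : deph M = M) :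
    ∃ σ, IsState σ ∧ deph σ = σ ∧ M = (M.trace.re : ℂ) • σ := by
  have htr : M.trace = (M.trace.re : ℂ) := Complex.eq_re_of_ofReal_le hM.trace_nonneg
  by_cases h0 : M.trace = 0
  · obtain ⟨a⟩ := ‹Nonempty ι›
    refine ⟨single a a 1, ⟨?_, trace_single_eq_same a 1⟩, ?_, by simp [hM.trace_eq_zero_iff.mp h0]⟩
    · rw [← diagonal_single]
      exact PosSemidef.diagonal (Pi.single_nonneg.mpr zero_le_one)
    · rw [← diagonal_single]
      ext i j
      by_cases h : i = j <;> simp [h]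
  · have hre : (M.trace.re : ℂ) ≠ 0 := htr ▸ h0
    refine ⟨(M.trace.re⁻¹ : ℂ) • M, ⟨hM.smul ?_, ?_⟩, by rw [map_smul, hinc], ?_⟩
    · exact_mod_cast inv_nonneg.mpr (Complex.nonneg_iff.mp hM.trace_nonneg).1
    · rw [trace_smul, smul_eq_mul, ← htr, inv_mul_cancel₀ h0]
    · rw [smul_smul, mul_inv_cancel₀ hre, one_smul]

end Dephasing

section ClassicalRegister

variable {A B C Z : Type*}

/-- `⟨z|ρ|z⟩`, which is `p_z ρ_{|z}` in the paper's notation. -/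
def diagBlock (z : Z) (ρ : Matrix (A × Z) (A × Z) ℂ) : Matrix A A ℂ :=
  ρ.submatrix (·, z) (·, z)

lemma trace_eq_sum_trace_diagBlock [Fintype A] [Fintype Z] (ρ : Matrix (A × Z) (A × Z) ℂ) :
    ρ.trace = ∑ z, (diagBlock z ρ).trace := by
  simp only [trace, diag, diagBlock, submatrix_apply]
  exact Fintype.sum_prod_type_right _

variable [DecidableEq Z]

noncomputable def kronSingle (z : Z) : Matrix B B ℂ →ₗ[ℂ] Matrix (B × Z) (B × Z) ℂ where
  toFun X := X ⊗ₖ single z z 1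
  map_add' X Y := add_kronecker X Y _
  map_smul' c X := smul_kronecker c X _

@[simp]
lemma kronSingle_apply (z : Z) (X : Matrix B B ℂ) : kronSingle z X = X ⊗ₖ single z z 1 := rfl

variable [Fintype Z]

lemma eq_sum_kronSingle_diagBlock {ρ : Matrix (A × Z) (A × Z) ℂ}
    (hρ : ∀ a a' z z', z ≠ z' → ρ (a, z) (a', z') = 0) :
    ρ = ∑ z, kronSingle z (diagBlock z ρ) := by
  ext ⟨a, y⟩ ⟨a', y'⟩
  simp only [Matrix.sum_apply, kronSingle_apply, kronecker_apply, single, of_apply, diagBlock,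
    submatrix_apply, mul_ite, mul_one, mul_zero]
  by_cases h : y = y'
  · subst h; simp
  · rw [hρ _ _ _ _ h]
    exact (Finset.sum_eq_zero fun c _ => if_neg fun hc : c = y ∧ c = y' => h (hc.1 ▸ hc.2)).symm

variable [Fintype A] [DecidableEq A] [Fintype B] [DecidableEq B] [Fintype C] [DecidableEq C]

lemma deph_diagBlock (z : Z) (ρ : Matrix (A × Z) (A × Z) ℂ) :
    deph (diagBlock z ρ) = diagBlock z (deph ρ) :=
  deph_submatrix (Prod.mk_left_injective z) ρ

lemma choi_comp_kronSingle (Ψ : SO (B × Z) C) (z : Z) :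
    choi (Ψ ∘ₗ kronSingle z) =
      (choi Ψ).submatrix (fun p : C × B => (p.1, (p.2, z))) (fun p => (p.1, (p.2, z))) := by
  ext p q
  simp [choi, single_kronecker_single]

lemma IsChannel.comp_kronSingle {Ψ : SO (B × Z) C} (hΨ : IsChannel Ψ) (z : Z) :
    IsChannel (Ψ ∘ₗ kronSingle z) :=
  ⟨choi_comp_kronSingle Ψ z ▸ hΨ.1.submatrix _, fun X => by simp [hΨ.2, trace_kronecker]⟩

lemma deph_comp_kronSingle (z : Z) :
    (deph ∘ₗ kronSingle z : Matrix B B ℂ →ₗ[ℂ] _) = kronSingle z ∘ₗ deph := by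
  ext X ⟨b, y⟩ ⟨b', y'⟩
  simp only [LinearMap.comp_apply, kronSingle_apply, deph_apply_s15, kronecker_apply, single,
    of_apply, Prod.mk.injEq]
  by_cases hb : b = b' <;> by_cases hy : y = y' <;> simp [hb, hy]
  rintro rfl rfl
  exact absurd rfl hy

lemma IsMIO.comp_kronSingle {Ψ : SO (B × Z) C} (hΨ : IsMIO Ψ) (z : Z) :
    IsMIO (Ψ ∘ₗ kronSingle z) :=
  calc (Ψ ∘ₗ kronSingle z) ∘ₗ deph = (Ψ ∘ₗ deph) ∘ₗ kronSingle z := by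
        rw [LinearMap.comp_assoc, ← deph_comp_kronSingle, LinearMap.comp_assoc]
    _ = deph ∘ₗ (Ψ ∘ₗ kronSingle z) ∘ₗ deph := by
        rw [hΨ]
        simp only [LinearMap.comp_assoc, deph_comp_kronSingle]

lemma apply_apply_eq_sum_single (Θ : SO A B) (X : Matrix A A ℂ) (b b' : B) :
    Θ X b b' = ∑ i, ∑ j, Θ (single i j 1) b b' * X i j := by
  conv_lhs => rw [matrix_eq_sum_single X]
  simp only [map_sum, Matrix.sum_apply]
  refine Finset.sum_congr rfl fun i _ => Finset.sum_congr rfl fun j _ => ?_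
  have : single i j (X i j) = X i j • single i j 1 := by simp
  rw [this, map_smul, Matrix.smul_apply, smul_eq_mul, mul_comm]

lemma tensorId_kronSingle (Θ : SO A B) (z : Z) (X : Matrix A A ℂ) :
    tensorId Θ (kronSingle z X) = kronSingle z (Θ X) := by
  ext ⟨b, y⟩ ⟨b', y'⟩
  simp only [tensorId, LinearMap.coe_mk, AddHom.coe_mk, of_apply, kronSingle_apply,
    kronecker_apply, apply_apply_eq_sum_single Θ X, Finset.sum_mul, mul_assoc]

end ClassicalRegister

theorem post_tensor_decomposition_general {A B C Z : Type*} [Fintype A] [DecidableEq A] [Nonempty A]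
    [Fintype B] [DecidableEq B] [Fintype C] [DecidableEq C]
    [Fintype Z] [DecidableEq Z]
    (Ψ : SO (B × Z) C) (hΨ : IsChannel Ψ) (Θ : SO A B)
    (ρ : Matrix (A × Z) (A × Z) ℂ) (hρ : IsState ρ) (hinc : deph ρ = ρ) :
    ∃ (p : Z → ℝ) (ρi : Z → Matrix A A ℂ) (Ψi : Z → SO B C),
      (∀ i, 0 ≤ p i) ∧ (∑ i, p i) = 1 ∧
      (∀ i, IsState (ρi i) ∧ deph (ρi i) = ρi i) ∧
      (∀ i, IsChannel (Ψi i)) ∧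
      Ψ (tensorId Θ ρ) = ∑ i, (p i : ℂ) • (Ψi i) (Θ (ρi i)) ∧
      (IsMIO Ψ → ∀ i, IsMIO (Ψi i)) := by
  have hblock : ∀ z, (diagBlock z ρ).PosSemidef := fun z => hρ.1.submatrix _
  choose σ hσ hσinc hσeq using fun z =>
    exists_incoherent_state_smul_eq (hblock z) (by rw [deph_diagBlock, hinc])
  have hclassical : ∀ a a' z z', z ≠ z' → ρ (a, z) (a', z') = 0 := fun a a' z z' h => by
    rw [← hinc, deph_apply_s15, if_neg (by simp [h])]
  refine ⟨fun z => (diagBlock z ρ).trace.re, σ, fun z => Ψ ∘ₗ kronSingle z,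
    fun z => (Complex.nonneg_iff.mp (hblock z).trace_nonneg).1, ?_, fun z => ⟨hσ z, hσinc z⟩,
    hΨ.comp_kronSingle, ?_, fun hM => hM.comp_kronSingle⟩
  · rw [← Complex.re_sum, ← trace_eq_sum_trace_diagBlock, hρ.2, Complex.one_re]
  · conv_lhs => rw [eq_sum_kronSingle_diagBlock hclassical]
    simp only [map_sum, tensorId_kronSingle]
    refine Finset.sum_congr rfl fun z _ => ?_
    conv_lhs => rw [hσeq z]
    simp only [map_smul, LinearMap.comp_apply]

/-- decomposition of `Ψ (Θ ⊗ id)(ρ)` for an incoherent input state `ρ` on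
`A ⊗ Z` into a convex combination of `Ψᵢ Θ (ρ|ᵢ)` with incoherent `ρ|ᵢ`; if `Ψ` is MIO the
`Ψᵢ` can be chosen MIO. -/
theorem post_tensor_decomposition {A B C Z : Type*} [Fintype A] [DecidableEq A] [Nonempty A]
    [Fintype B] [DecidableEq B] [Nonempty B] [Fintype C] [DecidableEq C] [Nonempty C]
    [Fintype Z] [DecidableEq Z] [Nonempty Z]
    (Ψ : SO (B × Z) C) (hΨ : IsChannel Ψ) (Θ : SO A B) (hΘ : IsChannel Θ)
    (ρ : Matrix (A × Z) (A × Z) ℂ) (hρ : IsState ρ) (hinc : deph ρ = ρ) :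
    ∃ (p : Z → ℝ) (ρi : Z → Matrix A A ℂ) (Ψi : Z → SO B C),
      (∀ i, 0 ≤ p i) ∧ (∑ i, p i) = 1 ∧
      (∀ i, IsState (ρi i) ∧ deph (ρi i) = ρi i) ∧
      (∀ i, IsChannel (Ψi i)) ∧
      Ψ (tensorId Θ ρ) = ∑ i, (p i : ℂ) • (Ψi i) (Θ (ρi i)) ∧
      (IsMIO Ψ → ∀ i, IsMIO (Ψi i)) :=
  post_tensor_decomposition_general Ψ hΨ Θ ρ hρ hinc
end

section
/- The set of bipartite operators of the form X_{AB} = (id^A ⊗ Θ^{B←A}) Σ_{i,j} ρ_{i,j} |ii⟩⟨jj|_{AA}, where Θ ranges over CPTP maps and ρ over quantum states, equals the set of operators Y_{AB} ≥ 0 whose partial trace over B is a diagonal state: tr_B Y = Δ(σ_A) for some state σ_A. -/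
open Matrix Complex
open scoped ComplexOrder

/-!
`(id ⊗ Θ)(∑ ρ_ij |ii⟩⟨jj|)` is the entrywise product of `ρ` (with entries repeated along `B`) and
the Choi matrix of `Θ`, hence positive by the Schur product theorem, and trace preservation of `Θ`
makes its marginal on `A` equal to `Δ ρ`.

Conversely, if `tr_B Y = Δ σ`, write `σ_ii = |v_i|²`, take `ρ = v v*` and the channel whose Choi
matrix is `(Δσ)^{-1/2} Y (Δσ)^{-1/2}`, completed by the maximally mixed output wherever
`v_i = 0`. In those blocks `Y` has zero diagonal, so positivity forces the corresponding rows and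
columns of `Y` to vanish, and `Y` is recovered exactly.
-/

lemma Matrix.PosSemidef.apply_eq_zero_of_diag_eq_zero {𝕜 n : Type*} [RCLike 𝕜] [Fintype n]
    [DecidableEq n] {M : Matrix n n 𝕜} (hM : M.PosSemidef) {i : n} (hi : M i i = 0) (j : n) :
    M j i = 0 ∧ M i j = 0 := by
  have hcol : M *ᵥ Pi.single i 1 = 0 :=
    (hM.dotProduct_mulVec_zero_iff _).1 (by simpa [mulVec_single] using hi)
  have hji : M j i = 0 := by simpa [mulVec_single] using congrFun hcol j
  refine ⟨hji, ?_⟩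
  rw [← hM.isHermitian.apply i j, hji, star_zero]

lemma deph_eq_diagonal {ι : Type*} [Fintype ι] [DecidableEq ι] (M : Matrix ι ι ℂ) :
    deph M = diagonal M.diag := by
  ext i j
  by_cases h : i = j <;> simp [deph, h]

section Choi

variable {ι κ : Type*} [Fintype ι] [DecidableEq ι] [Fintype κ] [DecidableEq κ]

noncomputable def ofChoi (C : Matrix (κ × ι) (κ × ι) ℂ) : SO ι κ where
  toFun M := of fun b b' => ∑ i, ∑ j, M i j * C (b, i) (b', j)
  map_add' M N := by
    ext b b'
    simp [add_mul, Finset.sum_add_distrib]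
  map_smul' c M := by
    ext b b'
    simp [Finset.mul_sum, mul_assoc]

lemma ofChoi_single_apply (C : Matrix (κ × ι) (κ × ι) ℂ) (i j : ι) (b b' : κ) :
    ofChoi C (single i j 1) b b' = C (b, i) (b', j) := by
  simp [ofChoi, single_apply, ite_and]

lemma choi_ofChoi (C : Matrix (κ × ι) (κ × ι) ℂ) : choi (ofChoi C) = C := by
  ext ⟨b, i⟩ ⟨b', j⟩
  exact ofChoi_single_apply C i j b b'

lemma trace_ofChoi (C : Matrix (κ × ι) (κ × ι) ℂ) (M : Matrix ι ι ℂ) :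
    (ofChoi C M).trace = ∑ i, ∑ j, M i j * ∑ b, C (b, i) (b, j) := by
  simp only [ofChoi, trace, diag, LinearMap.coe_mk, AddHom.coe_mk, of_apply, Finset.mul_sum]
  rw [Finset.sum_comm]
  exact Finset.sum_congr rfl fun i _ => Finset.sum_comm

lemma isChannel_ofChoi {C : Matrix (κ × ι) (κ × ι) ℂ} (hC : C.PosSemidef)
    (hC₁ : (of fun i j => ∑ b, C (b, i) (b, j)) = 1) : IsChannel (ofChoi C) := by
  refine ⟨(choi_ofChoi C).symm ▸ hC, fun M => ?_⟩
  have hC₁' : ∀ i j, ∑ b, C (b, i) (b, j) = if i = j then 1 else 0 := fun i j => by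
    simpa [one_apply] using congrFun (congrFun hC₁ i) j
  rw [trace_ofChoi]
  simp [hC₁', trace]

lemma trace_apply_single {Θ : SO ι κ} (hΘ : ∀ ρ, (Θ ρ).trace = ρ.trace) (i j : ι) :
    (Θ (single i j (1 : ℂ))).trace = if i = j then 1 else 0 := by
  rw [hΘ]
  split_ifs with h
  · subst h; exact trace_single_eq_same i 1
  · exact trace_single_eq_of_ne i j 1 h

end Choi

section WeightedChoi

variable {A B : Type*} [Fintype A] [DecidableEq A] [Fintype B] [DecidableEq B]

/-- The operator `(id ⊗ Θ) (∑ ρ_ij |ii⟩⟨jj|)`. -/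
noncomputable def weightedChoi (Θ : SO A B) (ρ : Matrix A A ℂ) : Matrix (A × B) (A × B) ℂ :=
  of fun p q => ρ p.1 q.1 * Θ (single p.1 q.1 1) p.2 q.2

lemma weightedChoi_eq_hadamard (Θ : SO A B) (ρ : Matrix A A ℂ) :
    weightedChoi Θ ρ =
      ρ.submatrix Prod.fst Prod.fst ⊙ (choi Θ).submatrix Prod.swap Prod.swap :=
  rfl

lemma posSemidef_weightedChoi {Θ : SO A B} {ρ : Matrix A A ℂ} (hΘ : (choi Θ).PosSemidef)
    (hρ : ρ.PosSemidef) : (weightedChoi Θ ρ).PosSemidef := by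
  rw [weightedChoi_eq_hadamard]
  exact (hρ.submatrix _).hadamard (hΘ.submatrix _)

lemma partialTrace_weightedChoi {Θ : SO A B} (hΘ : ∀ ρ, (Θ ρ).trace = ρ.trace)
    (ρ : Matrix A A ℂ) : (of fun i j => ∑ b, weightedChoi Θ ρ (i, b) (j, b)) = deph ρ := by
  ext i j
  have htr := trace_apply_single hΘ i j
  simp only [weightedChoi, of_apply, ← Finset.mul_sum]
  rw [show ∑ b, Θ (single i j 1) b b = (Θ (single i j 1)).trace from rfl, htr, deph_eq_diagonal]
  by_cases h : i = j <;> simp [h]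

end WeightedChoi

section NormalizedChoi

variable {A B : Type*} [Fintype A] [DecidableEq A] [Fintype B] [DecidableEq B]

/-- `(σ^{-1/2} ⊗ 1) Y (σ^{-1/2} ⊗ 1)` for `σ = diag |v|²`, padded by the maximally mixed state of `B` in the blocks where `v` vanishes. -/
noncomputable def normalizedChoi (Y : Matrix (A × B) (A × B) ℂ) (v : A → ℂ) :
    Matrix (B × A) (B × A) ℂ :=
  (diagonal fun p : B × A => (star (v p.2))⁻¹)ᴴ * Y.submatrix Prod.swap Prod.swap *
      diagonal (fun p : B × A => (star (v p.2))⁻¹) +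
    diagonal fun p => if v p.2 = 0 then (Fintype.card B : ℂ)⁻¹ else 0

lemma normalizedChoi_apply (Y : Matrix (A × B) (A × B) ℂ) (v : A → ℂ) (b : B) (i : A) (b' : B)
    (j : A) : normalizedChoi Y v (b, i) (b', j) =
      (v i)⁻¹ * Y (i, b) (j, b') * (star (v j))⁻¹ +
        if b = b' ∧ i = j ∧ v i = 0 then (Fintype.card B : ℂ)⁻¹ else 0 := by
  simp [normalizedChoi, diagonal_apply, ite_and]

lemma posSemidef_normalizedChoi {Y : Matrix (A × B) (A × B) ℂ} (hY : Y.PosSemidef) (v : A → ℂ) :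
    (normalizedChoi Y v).PosSemidef :=
  ((hY.submatrix _).conjTranspose_mul_mul_same _).add <|
    PosSemidef.diagonal fun _ => by split_ifs <;> positivity

end NormalizedChoi

lemma sum_apply_eq_of_marginal {A B : Type*} [DecidableEq A] [Fintype B]
    {Y : Matrix (A × B) (A × B) ℂ} {v : A → ℂ}
    (hmarg : (of fun i j => ∑ b, Y (i, b) (j, b)) = diagonal fun i => v i * star (v i))
    (i j : A) : ∑ b, Y (i, b) (j, b) = if i = j then v i * star (v i) else 0 := by
  simpa [diagonal_apply] using congrFun (congrFun hmarg i) j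

section Marginal

variable {A B : Type*} [Fintype A] [DecidableEq A] [Fintype B] [DecidableEq B]
  {Y : Matrix (A × B) (A × B) ℂ} {v : A → ℂ}

lemma apply_eq_zero_of_marginal_eq_zero (hY : Y.PosSemidef)
    (hmarg : (of fun i j => ∑ b, Y (i, b) (j, b)) = diagonal fun i => v i * star (v i))
    {i : A} (hi : v i = 0) (b : B) (q : A × B) : Y q (i, b) = 0 ∧ Y (i, b) q = 0 := by
  have hsum : ∑ b, Y (i, b) (i, b) = 0 := by simp [sum_apply_eq_of_marginal hmarg, hi]
  have hdiag : Y (i, b) (i, b) = 0 :=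
    (Finset.sum_eq_zero_iff_of_nonneg fun b _ => hY.diag_nonneg).1 hsum b (Finset.mem_univ b)
  exact hY.apply_eq_zero_of_diag_eq_zero hdiag q

lemma partialTrace_normalizedChoi [Nonempty B]
    (hmarg : (of fun i j => ∑ b, Y (i, b) (j, b)) = diagonal fun i => v i * star (v i)) :
    (of fun i j => ∑ b, normalizedChoi Y v (b, i) (b, j)) = 1 := by
  ext i j
  simp only [of_apply, normalizedChoi_apply, Finset.sum_add_distrib, ← Finset.mul_sum,
    ← Finset.sum_mul, sum_apply_eq_of_marginal hmarg, one_apply]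
  by_cases hij : i = j
  · subst hij
    by_cases hi : v i = 0
    · simp [hi, Finset.card_univ]
    · simp [hi]
  · simp [hij]

lemma weightedChoi_ofChoi_normalizedChoi (hY : Y.PosSemidef)
    (hmarg : (of fun i j => ∑ b, Y (i, b) (j, b)) = diagonal fun i => v i * star (v i)) :
    weightedChoi (ofChoi (normalizedChoi Y v)) (vecMulVec v (star v)) = Y := by
  ext ⟨i, b⟩ ⟨j, b'⟩
  simp only [weightedChoi, of_apply, ofChoi_single_apply, normalizedChoi_apply, vecMulVec_apply,
    Pi.star_apply]
  by_cases hi : v i = 0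
  · simp [hi, (apply_eq_zero_of_marginal_eq_zero hY hmarg hi b (j, b')).2]
  by_cases hj : v j = 0
  · simp [hj, (apply_eq_zero_of_marginal_eq_zero hY hmarg hj b' (i, b)).1]
  simp only [hi, and_false, if_false, add_zero]
  calc _ = (v i * (v i)⁻¹) * (star (v j) * (star (v j))⁻¹) * Y (i, b) (j, b') := by ring
    _ = Y (i, b) (j, b') := by
      rw [mul_inv_cancel₀ hi, mul_inv_cancel₀ (star_ne_zero.2 hj), one_mul, one_mul]

end Marginal

theorem channel_state_set_eq_general {A B : Type*} [Fintype A] [DecidableEq A]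
    [Fintype B] [DecidableEq B] [Nonempty B] :
    {X : Matrix (A × B) (A × B) ℂ | ∃ (Θ : SO A B) (ρ : Matrix A A ℂ),
        IsChannel Θ ∧ IsState ρ ∧
        X = Matrix.of fun p q =>
          ρ p.1 q.1 * Θ (Matrix.single p.1 q.1 1) p.2 q.2}
      = {Y : Matrix (A × B) (A × B) ℂ | Y.PosSemidef ∧ ∃ σ : Matrix A A ℂ, IsState σ ∧
          (Matrix.of fun i j : A => ∑ b, Y (i, b) (j, b)) = deph σ} := by
  ext Y
  constructor
  · rintro ⟨Θ, ρ, hΘ, hρ, rfl⟩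
    exact ⟨posSemidef_weightedChoi hΘ.1 hρ.1, ρ, hρ, partialTrace_weightedChoi hΘ.2 ρ⟩
  · rintro ⟨hY, σ, hσ, hpt⟩
    choose s hs₀ hs using fun i => RCLike.nonneg_iff_exists_ofReal.1 (hσ.1.diag_nonneg (i := i))
    set v : A → ℂ := fun i => (Real.sqrt (s i) : ℂ)
    have hv : ∀ i, v i * star (v i) = σ i i := fun i => by
      simp [v, ← hs i, ← Complex.ofReal_mul, Real.mul_self_sqrt (hs₀ i)]
    have hmarg : (of fun i j => ∑ b, Y (i, b) (j, b)) = diagonal fun i => v i * star (v i) := by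
      simp only [hpt, deph_eq_diagonal, hv]
      rfl
    refine ⟨ofChoi (normalizedChoi Y v), vecMulVec v (star v),
      isChannel_ofChoi (posSemidef_normalizedChoi hY v) (partialTrace_normalizedChoi hmarg),
      ⟨posSemidef_vecMulVec_self_star v, ?_⟩, (weightedChoi_ofChoi_normalizedChoi hY hmarg).symm⟩
    simp only [trace_vecMulVec, dotProduct, Pi.star_apply, hv]
    exact hσ.2

/-- characterization of the operators `(id ⊗ Θ) Σ ρ_{ij} |ii⟩⟨jj|` for a
channel `Θ` and a state `ρ`: they are exactly the PSD operators whose partial trace over `B`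
is a diagonal state. -/
theorem channel_state_set_eq {A B : Type*} [Fintype A] [DecidableEq A] [Nonempty A]
    [Fintype B] [DecidableEq B] [Nonempty B] :
    {X : Matrix (A × B) (A × B) ℂ | ∃ (Θ : SO A B) (ρ : Matrix A A ℂ),
        IsChannel Θ ∧ IsState ρ ∧
        X = Matrix.of fun p q =>
          ρ p.1 q.1 * Θ (Matrix.single p.1 q.1 1) p.2 q.2}
      = {Y : Matrix (A × B) (A × B) ℂ | Y.PosSemidef ∧ ∃ σ : Matrix A A ℂ, IsState σ ∧
          (Matrix.of fun i j : A => ∑ b, Y (i, b) (j, b)) = deph σ} :=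
  channel_state_set_eq_general
end
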